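/- The exchange relation of clusters is an involution: let (P,⊕) be a semifield, K a field, and ι : P → K∖{0} a map with ι(a·b) = ι(a)·ι(b) for all a,b ∈ P. Let I be a finite index set, B = (B_{ij})_{i,j∈I} an integer matrix with B_{kk} = 0, k ∈ I, x = (x_i)_{i∈I} a family of nonzero elements of K, and y_k ∈ P. Define x'_i = x_i for i ≠ k and x'_k = (ι(y_k)·∏_{j : B_{jk} > 0} x_j^{B_{jk}} + ∏_{j : B_{jk} < 0} x_j^{−B_{jk}}) / (ι(1⊕y_k)·x_k), and assume x'_k ≠ 0. Let B' = μ_k(B) and y'_k = y_k^{-1}, and define x''_k = (ι(y'_k)·∏_{j : B'_{jk} > 0} (x'_j)^{B'_{jk}} + ∏_{j : B'_{jk} < 0} (x'_j)^{−B'_{jk}}) / (ι(1⊕y'_k)·x'_k). Then x''_k = x_k. -/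

import Mathlib

open Finset

/-- Mutation of an integer matrix at index `k` (the matrix mutation underlying
seed mutation in the theory of cluster algebras with coefficients). -/
def mutateMat {I : Type*} [Fintype I] [DecidableEq I]
    (B : Matrix I I ℤ) (k : I) : Matrix I I ℤ :=
  Matrix.of fun i j =>
    if i = k ∨ j = k then -B i j
    else B i j + (|B i k| * B k j + B i k * |B k j|) / 2

/-!
Write `p⁺` and `p⁻` for the two monomials of the exchange relation at `k`, so that
`x'_k = (ι y p⁺ + p⁻) / (ι (1 ⊕ y) x_k)`. Mutation negates the `k`-th column of `B` and
`B_kk = 0`, so the monomials of the second exchange are `p⁻` and `p⁺` again (they do not involve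
`x_k`). Since `ι (1 ⊕ y⁻¹) = ι y⁻¹ ι (1 ⊕ y)`, the second exchange is
`ι y⁻¹ (p⁻ + ι y p⁺) / (ι y⁻¹ ι (1 ⊕ y) x'_k) = x_k`.
-/

theorem mutateMat_apply_self_col {I : Type*} [Fintype I] [DecidableEq I]
    (B : Matrix I I ℤ) (k j : I) : mutateMat B k j k = -B j k := by
  simp [mutateMat]

theorem map_one_of_map_mul {M M₀ : Type*} [MulOneClass M] [MonoidWithZero M₀]
    [IsLeftCancelMulZero M₀]
    {f : M → M₀} (hf : ∀ a b, f (a * b) = f a * f b) (h1 : f 1 ≠ 0) : f 1 = 1 :=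
  mul_left_cancel₀ h1 (by rw [← hf, mul_one, mul_one])

theorem map_inv_of_map_mul {G G₀ : Type*} [Group G] [GroupWithZero G₀]
    {f : G → G₀} (hf : ∀ a b, f (a * b) = f a * f b) (h0 : ∀ a, f a ≠ 0) (a : G) :
    f a⁻¹ = (f a)⁻¹ :=
  eq_inv_of_mul_eq_one_left (by rw [← hf, inv_mul_cancel, map_one_of_map_mul hf (h0 1)])

theorem op_one_inv {P : Type*} [Group P] {op : P → P → P}
    (hcomm : ∀ a b : P, op a b = op b a) (hdistrib : ∀ a b c : P, a * op b c = op (a * b) (a * c))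
    (y : P) : op 1 y⁻¹ = y⁻¹ * op 1 y := by
  rw [hdistrib, mul_one, inv_mul_cancel, hcomm]

section Exchange

variable {I K : Type*} [Fintype I] [Field K]

def posMonomial (b : I → ℤ) (x : I → K) : K :=
  ∏ j ∈ univ.filter (fun j => 0 < b j), x j ^ b j

theorem posMonomial_neg (b : I → ℤ) (x : I → K) :
    posMonomial (-b) x = ∏ j ∈ univ.filter (fun j => b j < 0), x j ^ (-b j) := by
  simp only [posMonomial, Pi.neg_apply, Left.neg_pos_iff]

theorem posMonomial_congr_of_eq_zero {b : I → ℤ} {x x' : I → K} {k : I}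
    (hb : b k = 0) (hx' : ∀ i, i ≠ k → x' i = x i) : posMonomial b x' = posMonomial b x := by
  refine prod_congr rfl fun j hj => ?_
  have hjk : j ≠ k := by rintro rfl; simp [hb] at hj
  rw [hx' j hjk]

variable {P : Type*}

def clusterExchange [One P] (op : P → P → P) (ι : P → K) (y : P) (b : I → ℤ) (x : I → K)
    (xk : K) : K :=
  (ι y * posMonomial b x + posMonomial (-b) x) / (ι (op 1 y) * xk)

theorem clusterExchange_eq [One P] (op : P → P → P) (ι : P → K) (y : P) (b : I → ℤ)
    (x : I → K) (xk : K) :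
    clusterExchange op ι y b x xk =
      (ι y * ∏ j ∈ univ.filter (fun j => 0 < b j), x j ^ b j +
        ∏ j ∈ univ.filter (fun j => b j < 0), x j ^ (-b j)) / (ι (op 1 y) * xk) := by
  rw [clusterExchange, posMonomial_neg, posMonomial]

theorem clusterExchange_inv_neg [Group P] {op : P → P → P}
    (hcomm : ∀ a b : P, op a b = op b a) (hdistrib : ∀ a b c : P, a * op b c = op (a * b) (a * c))
    {ι : P → K} (hι : ∀ a b : P, ι (a * b) = ι a * ι b) (hι0 : ∀ a : P, ι a ≠ 0)
    {y : P} {b : I → ℤ} {k : I} (hb : b k = 0) {x x' : I → K}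
    (hx' : ∀ i, i ≠ k → x' i = x i) (hx'k : x' k = clusterExchange op ι y b x (x k))
    (hx'k0 : x' k ≠ 0) :
    clusterExchange op ι y⁻¹ (-b) x' (x' k) = x k := by
  have hnum : ι y * posMonomial b x + posMonomial (-b) x ≠ 0 := by
    intro h; apply hx'k0; rw [hx'k, clusterExchange, h, zero_div]
  have hxk : x k ≠ 0 := by
    intro h; apply hx'k0; rw [hx'k, clusterExchange, h, mul_zero, div_zero]
  rw [clusterExchange, neg_neg, posMonomial_congr_of_eq_zero hb hx',
    posMonomial_congr_of_eq_zero (by simp [hb]) hx', op_one_inv hcomm hdistrib, hι,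
    map_inv_of_map_mul hι hι0, hx'k, clusterExchange]
  have hy := hι0 y
  have hop := hι0 (op 1 y)
  field_simp
  ring

end Exchange

theorem cluster_mutation_involution_general
    {P : Type*} [CommGroup P] (op : P → P → P)
    (hcomm : ∀ a b : P, op a b = op b a)
    (hdistrib : ∀ a b c : P, a * op b c = op (a * b) (a * c))
    {K : Type*} [Field K]
    (ι : P → K) (hι : ∀ a b : P, ι (a * b) = ι a * ι b) (hι0 : ∀ a : P, ι a ≠ 0)
    {I : Type*} [Fintype I] [DecidableEq I]
    (B : Matrix I I ℤ) (k : I) (hBkk : B k k = 0)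
    (x : I → K) (yk : P)
    (x' : I → K)
    (hx'ne : ∀ i, i ≠ k → x' i = x i)
    (hx'k : x' k =
      (ι yk * ∏ j ∈ univ.filter (fun j => 0 < B j k), x j ^ (B j k) +
        ∏ j ∈ univ.filter (fun j => B j k < 0), x j ^ (-(B j k))) /
      (ι (op 1 yk) * x k))
    (hx'k0 : x' k ≠ 0)
    (x''k : K)
    (hx''k : x''k =
      (ι yk⁻¹ * ∏ j ∈ univ.filter (fun j => 0 < mutateMat B k j k), x' j ^ (mutateMat B k j k) +
        ∏ j ∈ univ.filter (fun j => mutateMat B k j k < 0), x' j ^ (-(mutateMat B k j k))) /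
      (ι (op 1 yk⁻¹) * x' k)) :
    x''k = x k := by
  have hcol : (fun j => mutateMat B k j k) = -fun j => B j k :=
    funext (mutateMat_apply_self_col B k)
  rw [hx''k, ← clusterExchange_eq, hcol]
  exact clusterExchange_inv_neg hcomm hdistrib hι hι0 (b := fun j => B j k) hBkk hx'ne
    (hx'k.trans (clusterExchange_eq op ι yk _ x (x k)).symm) hx'k0

/-- The exchange relation of clusters is an involution.
Here `(P, op)` is a semifield (an abelian multiplicative group with a commutative,
associative, multiplication-distributive addition `op`), `K` is a field, and
`ι : P → K ∖ {0}` is multiplicative. -/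
theorem cluster_mutation_involution
    {P : Type*} [CommGroup P] (op : P → P → P)
    (hcomm : ∀ a b : P, op a b = op b a)
    (hassoc : ∀ a b c : P, op (op a b) c = op a (op b c))
    (hdistrib : ∀ a b c : P, a * op b c = op (a * b) (a * c))
    {K : Type*} [Field K]
    (ι : P → K) (hι : ∀ a b : P, ι (a * b) = ι a * ι b) (hι0 : ∀ a : P, ι a ≠ 0)
    {I : Type*} [Fintype I] [DecidableEq I]
    (B : Matrix I I ℤ) (k : I) (hBkk : B k k = 0)
    (x : I → K) (hx : ∀ i, x i ≠ 0) (yk : P)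
    (x' : I → K)
    (hx'ne : ∀ i, i ≠ k → x' i = x i)
    (hx'k : x' k =
      (ι yk * ∏ j ∈ univ.filter (fun j => 0 < B j k), x j ^ (B j k) +
        ∏ j ∈ univ.filter (fun j => B j k < 0), x j ^ (-(B j k))) /
      (ι (op 1 yk) * x k))
    (hx'k0 : x' k ≠ 0)
    (x''k : K)
    (hx''k : x''k =
      (ι yk⁻¹ * ∏ j ∈ univ.filter (fun j => 0 < mutateMat B k j k), x' j ^ (mutateMat B k j k) +
        ∏ j ∈ univ.filter (fun j => mutateMat B k j k < 0), x' j ^ (-(mutateMat B k j k))) /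
      (ι (op 1 yk⁻¹) * x' k)) :
    x''k = x k :=
  cluster_mutation_involution_general op hcomm hdistrib ι hι hι0 B k hBkk x yk x' hx'ne hx'k hx'k0
    x''k hx''k
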